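/- Theorem 1 (regret difference bound): Let 𝒳 ⊂ ℝ^d be compact with diameter γ, f_e : 𝒳 → ℝ be M-Lipschitz, x* ∈ 𝒳, x_0 ∈ 𝒳 a fixed index point, and x_g, x_l be 𝒳-valued random vectors, and let β₀ = P(x_l = x_0) be the probability that x_l coincides with x_0. Define regrets r_g = f_e(x_g) − f_e(x*) and r_l = f_e(x_l) − f_e(x*). Assume δ = |f_e(x_g) − f_e(x_0)| is a deterministic constant, and let d₀ = E[‖x_0 − x_g‖₂]. Then for any ε_l > 0 and any η₁, η₂ > 0 with η₁·η₂ = ε_l + δ: P(|r_g − r_l| < ε_l) ≥ 1 − d₀/η₁ − (1 − β₀)γ/η₁ − M/η₂. -/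

import Mathlib

open MeasureTheory

lemma arith_aux (e d a u p : ℝ) (he : 0 < e) (hd : 0 ≤ d) (ha : 0 ≤ a) (hu : 0 < u)
    (hp0 : 0 ≤ p) (hp1 : p ≤ 1) (hkey : d < e → p * (e - d) ≤ a) :
    p ≤ (a + d) / u + u / (e + d) := by
  have hed : 0 < e + d := by linarith
  rw [div_add_div _ _ (ne_of_gt hu) (ne_of_gt hed), le_div_iff₀ (by positivity)]
  rcases le_or_gt e (2*d) with h1 | h1
  · nlinarith [sq_nonneg (2*u - (e+d)), mul_pos hu hed, mul_nonneg (mul_pos hu hed).le (sub_nonneg.mpr hp1)]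
  · rcases le_or_gt (e - d) a with h2 | h2
    · nlinarith [sq_nonneg (2*u - (e+d)), mul_pos hu hed, mul_nonneg (mul_pos hu hed).le (sub_nonneg.mpr hp1)]
    · have hk := hkey (by linarith)
      have hed' : (0:ℝ) ≤ e - d := by linarith
      have hkey2 : a*a*(e+d) ≤ 4*(a+d)*((e-d)*(e-d)) := by
        calc a*a*(e+d) ≤ a*(e-d)*(e+d) :=
              mul_le_mul_of_nonneg_right (mul_le_mul_of_nonneg_left h2.le ha) hed.le
          _ ≤ a*(e-d)*(4*(e-d)) :=
              mul_le_mul_of_nonneg_left (by linarith) (mul_nonneg ha hed')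
          _ ≤ 4*(a+d)*((e-d)*(e-d)) := by nlinarith [mul_nonneg hd (mul_nonneg hed' hed')]
      have hedpos : (0:ℝ) < e - d := by linarith
      have h4 : 4*(e-d)*(a*(u*(e+d))) ≤ 4*(e-d)*((e-d)*((a+d)*(e+d)+u*u)) := by
        nlinarith [sq_nonneg (2*(e-d)*u - a*(e+d)), mul_le_mul_of_nonneg_left hkey2 hed.le]
      have hC : a*(u*(e+d)) ≤ (e-d)*((a+d)*(e+d)+u*u) :=
        le_of_mul_le_mul_left (by linarith) (by positivity : (0:ℝ) < 4*(e-d))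
      have hP : p*(e-d)*(u*(e+d)) ≤ a*(u*(e+d)) :=
        mul_le_mul_of_nonneg_right hk (mul_pos hu hed).le
      have h5 : (e-d)*(p*(u*(e+d))) ≤ (e-d)*((a+d)*(e+d)+u*u) := by linarith [hP, hC]
      exact le_of_mul_le_mul_left h5 hedpos

/-- Theorem 1 (regret difference bound): under the stated conditions,
`P(|r_g − r_l| < ε_l) ≥ 1 − d₀/η₁ − (1 − β₀)γ/η₁ − M/η₂`. -/
theorem stmt_7 {d : ℕ} {Ω : Type*} [MeasurableSpace Ω]
    (μ : Measure Ω) [IsProbabilityMeasure μ]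
    (𝒳 : Set (EuclideanSpace ℝ (Fin d))) (hcomp : IsCompact 𝒳)
    (fe : EuclideanSpace ℝ (Fin d) → ℝ) (M : ℝ) (hM : 0 < M)
    (hf : ∀ x y, |fe x - fe y| ≤ M * ‖x - y‖)
    (x0 xstar : EuclideanSpace ℝ (Fin d)) (hx0 : x0 ∈ 𝒳) (hxstar : xstar ∈ 𝒳)
    (xg xl : Ω → EuclideanSpace ℝ (Fin d))
    (hxg : Measurable xg) (hxl : Measurable xl)
    (hxgi : Integrable xg μ)
    (hrg : ∀ ω, xg ω ∈ 𝒳) (hrl : ∀ ω, xl ω ∈ 𝒳)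
    (γ β₀ d₀ δ εl η₁ η₂ : ℝ)
    (hγ : γ = Metric.diam 𝒳)
    (hβ : β₀ = (μ {ω | xl ω = x0}).toReal)
    (hd₀ : d₀ = ∫ ω, ‖x0 - xg ω‖ ∂μ)
    (hδ : ∀ ω, |fe (xg ω) - fe x0| = δ)
    (hεl : 0 < εl) (hη₁ : 0 < η₁) (hη₂ : 0 < η₂) (hη : η₁ * η₂ = εl + δ) :
    1 - d₀ / η₁ - (1 - β₀) * γ / η₁ - M / η₂ ≤
      (μ {ω | |(fe (xg ω) - fe xstar) - (fe (xl ω) - fe xstar)| < εl}).toReal := by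
  -- fe is continuous
  have hMnn : (0:ℝ) ≤ M := hM.le
  have hcont : Continuous fe := by
    have : LipschitzWith M.toNNReal fe := by
      apply LipschitzWith.of_dist_le_mul
      intro x y
      rw [Real.coe_toNNReal M hMnn]
      simpa [Real.dist_eq, dist_eq_norm] using hf x y
    exact this.continuous
  -- simplify the event
  have hEset : {ω | |(fe (xg ω) - fe xstar) - (fe (xl ω) - fe xstar)| < εl}
      = {ω | |fe (xg ω) - fe (xl ω)| < εl} := by
    ext ω; simp [sub_sub_sub_cancel_right]
  rw [hEset]
  set E : Set Ω := {ω | |fe (xg ω) - fe (xl ω)| < εl} with hE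
  have hEm : MeasurableSet E := by
    exact measurableSet_lt (((hcont.measurable.comp hxg).sub (hcont.measurable.comp hxl)).abs)
      measurable_const
  set p : ℝ := (μ Eᶜ).toReal with hp
  have hone : (μ E).toReal = 1 - p := by
    have h1 : μ Eᶜ = 1 - μ E := prob_compl_eq_one_sub hEm
    have h2 : μ E ≤ 1 := prob_le_one
    rw [hp, h1, ENNReal.toReal_sub_of_le h2 ENNReal.one_ne_top]
    simp
  rw [hone]
  -- nonempty Ω
  have hΩ : Nonempty Ω := by
    by_contra h
    rw [not_nonempty_iff] at h
    have := measure_univ (μ := μ)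
    rw [Set.univ_eq_empty_iff.mpr h, measure_empty] at this
    exact zero_ne_one this
  obtain ⟨ω₀⟩ := hΩ
  -- δ ≥ 0
  have hδ0 : 0 ≤ δ := (hδ ω₀) ▸ abs_nonneg _
  -- γ ≥ 0
  have hγ0 : 0 ≤ γ := hγ ▸ Metric.diam_nonneg
  -- β₀ ∈ [0,1]
  have hβ0 : 0 ≤ β₀ := hβ ▸ ENNReal.toReal_nonneg
  have hβ1 : β₀ ≤ 1 := by
    rw [hβ]
    exact ENNReal.toReal_le_of_le_ofReal zero_le_one (by simpa using prob_le_one)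
  -- d₀ ≥ δ/M
  have hd0M : δ / M ≤ d₀ := by
    rw [hd₀]
    have hint : Integrable (fun ω => ‖x0 - xg ω‖) μ := ((integrable_const x0).sub hxgi).norm
    have hle : ∀ ω, δ / M ≤ ‖x0 - xg ω‖ := by
      intro ω
      rw [div_le_iff₀' hM]
      calc δ = |fe (xg ω) - fe x0| := (hδ ω).symm
        _ ≤ M * ‖xg ω - x0‖ := hf _ _
        _ = M * ‖x0 - xg ω‖ := by rw [norm_sub_rev]
    calc δ / M = ∫ _ω, δ / M ∂μ := by simp
      _ ≤ ∫ ω, ‖x0 - xg ω‖ ∂μ := integral_mono (integrable_const _) hint hle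
  -- bounds on p
  have hp0 : 0 ≤ p := ENNReal.toReal_nonneg
  have hp1 : p ≤ 1 := by
    rw [hp]
    exact ENNReal.toReal_le_of_le_ofReal zero_le_one (by simpa using prob_le_one)
  -- key Markov-type bound
  have hkey : δ < εl → p * (εl - δ) ≤ M * ((1 - β₀) * γ) := by
    intro hde
    have hsub : Eᶜ ⊆ {ω | xl ω ≠ x0} := by
      intro ω hω
      simp only [hE, Set.mem_compl_iff, Set.mem_setOf_eq, not_lt] at hω
      intro hx
      rw [hx] at hω
      rw [hδ ω] at hω
      linarith
    have hA : (μ {ω | xl ω ≠ x0}).toReal = 1 - β₀ := by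
      have hms : MeasurableSet {ω | xl ω = x0} := hxl (measurableSet_singleton x0)
      have : {ω | xl ω ≠ x0} = {ω | xl ω = x0}ᶜ := rfl
      rw [this, prob_compl_eq_one_sub hms,
        ENNReal.toReal_sub_of_le prob_le_one ENNReal.one_ne_top, hβ]
      simp
    have hpA : p ≤ 1 - β₀ := by
      rw [← hA]
      exact ENNReal.toReal_mono (measure_ne_top _ _) (measure_mono hsub)
    rcases Set.eq_empty_or_nonempty Eᶜ with hemp | ⟨ω₁, hω₁⟩
    · have : p = 0 := by rw [hp, hemp]; simp
      rw [this, zero_mul]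
      exact mul_nonneg hMnn (mul_nonneg (by linarith) hγ0)
    · -- εl - δ ≤ M * γ
      have hw : εl ≤ |fe (xg ω₁) - fe (xl ω₁)| := by
        simpa [hE, not_lt] using hω₁
      have htri : |fe (xg ω₁) - fe (xl ω₁)| ≤ δ + M * γ := by
        calc |fe (xg ω₁) - fe (xl ω₁)|
            ≤ |fe (xg ω₁) - fe x0| + |fe x0 - fe (xl ω₁)| := abs_sub_le _ _ _
          _ ≤ δ + M * ‖x0 - xl ω₁‖ := by
              rw [hδ ω₁]
              exact add_le_add le_rfl (hf _ _)
          _ ≤ δ + M * γ := by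
              have : ‖x0 - xl ω₁‖ ≤ γ := by
                rw [hγ, ← dist_eq_norm]
                exact Metric.dist_le_diam_of_mem hcomp.isBounded hx0 (hrl ω₁)
              nlinarith
      have h1 : εl - δ ≤ M * γ := by linarith
      calc p * (εl - δ) ≤ (1 - β₀) * (M * γ) :=
            mul_le_mul hpA h1 (by linarith) (by linarith)
        _ = M * ((1 - β₀) * γ) := by ring
  -- apply arithmetic lemma
  have harith := arith_aux εl δ (M * ((1 - β₀) * γ)) (M * η₁) p hεl hδ0
    (mul_nonneg hMnn (mul_nonneg (by linarith) hγ0)) (by positivity) hp0 hp1 hkey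
  have e1 : (M * ((1 - β₀) * γ) + δ) / (M * η₁) = (1 - β₀) * γ / η₁ + δ / M / η₁ := by
    field_simp
  have e2 : δ / M / η₁ ≤ d₀ / η₁ := by gcongr
  have e3 : M * η₁ / (εl + δ) = M / η₂ := by
    rw [← hη]
    field_simp
  rw [e1, e3] at harith
  linarith
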